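/- The three-dimensional wedge counterexample: the function B is harmonic on Ω_α; B vanishes on the Dirichlet face D (that is, B(x, y, 0) → 0 as a point of Ω_α tends to a point (x, y, 0) with y > 0, and the real-analytic extension of B across D is 0 on D); the derivative of (the real-analytic extension of) B in the unit direction (0, −sin α, cos α) normal to the Neumann face N vanishes at every point of N; and nevertheless the gradient of B fails to be square-integrable on the Dirichlet face near the edge: ∫_{{(x,y,0) : |x|<1, 0<y<1}} ‖∇B‖² dH² = +∞. -/

import Mathlib

/-!
In the cross-sectional plane `z = y + t i`, `B = Im f(z)` for a holomorphic branch `f` of `z ^ β`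
whose cut avoids the closed sector `0 ≤ arg z ≤ α`. Hence `B` is harmonic (its Laplacian is
`Im (f'' · (1 + i²)) = 0`), and its gradient is read off from `f'`: `|∇B| = |f'| = β r^(β-1)`.
On `N` the normal direction is `i e^(iα)`, and `f'(r e^(iα)) · i e^(iα) = i β r^(β-1) e^(iβα)`
is real because `βα = π/2`. On `D` we get `|∇B|² = β² y^(2β-2)` with `2β - 2 ≤ -1`, which is not
integrable near `y = 0`; the Hausdorff measure `μH[2]` on the plane `t = 0` dominates Lebesgue
measure, so the face integral diverges.
-/

open MeasureTheory Filter

noncomputable section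

/-- The point `(x, y, t)` of `ℝ³ = EuclideanSpace ℝ (Fin 3)`. -/
def pt (x y t : ℝ) : EuclideanSpace ℝ (Fin 3) :=
  (WithLp.equiv 2 (Fin 3 → ℝ)).symm ![x, y, t]

/-- The open wedge `Ω_α = {(x, r cos θ, r sin θ) : x ∈ ℝ, r > 0, 0 < θ < α}`. -/
def wedge (α : ℝ) : Set (EuclideanSpace ℝ (Fin 3)) :=
  {p | ∃ x r θ : ℝ, 0 < r ∧ 0 < θ ∧ θ < α ∧
    p = pt x (r * Real.cos θ) (r * Real.sin θ)}

/-- The squared Euclidean norm of the gradient of `B : ℝ³ → ℝ`. -/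
def gradNormSq (B : EuclideanSpace ℝ (Fin 3) → ℝ) (p : EuclideanSpace ℝ (Fin 3)) : ℝ :=
  ∑ i, (fderiv ℝ B p (EuclideanSpace.single i 1)) ^ 2

open Complex Topology
open scoped Real

/-- The branch of `z ^ s` whose cut is the ray of argument `c + π`. -/
def cpowBranch (c : ℝ) (s z : ℂ) : ℂ :=
  exp (s * (c * I)) * (exp (-(c * I)) * z) ^ s

theorem cpowBranch_exp {c : ℝ} {w : ℂ} (hw : |w.im - c| < π) (s : ℂ) :
    cpowBranch c s (exp w) = exp (s * w) := by
  obtain ⟨h₁, h₂⟩ := abs_lt.1 hw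
  have hlog : log (exp (w - c * I)) = w - c * I :=
    log_exp (by simpa using h₁) (by simpa using h₂.le)
  rw [cpowBranch, ← exp_add, neg_add_eq_sub, cpow_def_of_ne_zero (exp_ne_zero _), hlog,
    ← exp_add]
  ring_nf

theorem hasDerivAt_cpowBranch {c : ℝ} {z : ℂ} (hz : exp (-(c * I)) * z ∈ slitPlane) (s : ℂ) :
    HasDerivAt (cpowBranch c s) (s * cpowBranch c (s - 1) z) z := by
  have h := (((hasDerivAt_id z).const_mul (exp (-(c * I)))).cpow_const (c := s) hz).const_mul
    (exp (s * (c * I)))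
  refine h.congr_deriv ?_
  have hrot : exp (s * (c * I)) * exp (-(c * I)) = exp ((s - 1) * (c * I)) := by
    rw [← exp_add]
    ring_nf
  simp only [cpowBranch, id_eq, mul_one]
  linear_combination (s * (exp (-(c * I)) * z) ^ (s - 1)) * hrot

theorem exp_mem_slitPlane_of_abs_im_lt {w : ℂ} (hw : |w.im| < π) : exp w ∈ slitPlane := by
  obtain ⟨h₁, h₂⟩ := abs_lt.1 hw
  rw [exp_mem_slitPlane, (toIocMod_eq_self _).2 ⟨h₁, by linarith⟩]
  exact h₂.ne

/-- The open sector `{r e^(iθ) : r > 0, a < θ < b}`. -/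
def sector (a b : ℝ) : Set ℂ := exp '' (im ⁻¹' Set.Ioo a b)

theorem isOpen_sector (a b : ℝ) : IsOpen (sector a b) :=
  isOpenMap_exp _ (isOpen_Ioo.preimage continuous_im)

theorem exp_neg_mul_mem_slitPlane_of_mem_sector {a b : ℝ} (hab : b - a ≤ 2 * π) {z : ℂ}
    (hz : z ∈ sector a b) : exp (-(((a + b) / 2 : ℝ) * I)) * z ∈ slitPlane := by
  obtain ⟨w, ⟨h₁, h₂⟩, rfl⟩ := hz
  rw [← exp_add, neg_add_eq_sub]
  refine exp_mem_slitPlane_of_abs_im_lt ?_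
  simpa using
    abs_lt.2 (⟨by linarith, by linarith⟩ : -π < w.im - (a + b) / 2 ∧ w.im - (a + b) / 2 < π)

section ImComp

variable {E : Type*} [NormedAddCommGroup E] [NormedSpace ℝ E] (L : E →L[ℝ] ℂ)

theorem HasDerivAt.hasFDerivAt_im_comp_clm {f : ℂ → ℂ} {f' : ℂ} {p : E}
    (hf : HasDerivAt f f' (L p)) :
    HasFDerivAt (fun q => (f (L q)).im) (imCLM ∘L (f' • L)) p := by
  refine (imCLM.hasFDerivAt.comp p
    ((hf.hasFDerivAt.restrictScalars ℝ).comp p L.hasFDerivAt)).congr_fderiv ?_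
  ext v
  simp [mul_comm]

theorem sum_fderiv_fderiv_im_comp_clm {ι : Type*} [Fintype ι] (e : ι → E)
    (hL : ∑ i, L (e i) ^ 2 = 0) {f f' : ℂ → ℂ} {f'' : ℂ} {u : E → ℝ} {p : E}
    (hu : u =ᶠ[𝓝 p] fun q => (f (L q)).im)
    (hf : ∀ᶠ q in 𝓝 p, HasDerivAt f (f' (L q)) (L q)) (hf' : HasDerivAt f' f'' (L p)) :
    ∑ i, fderiv ℝ (fun q => fderiv ℝ u q (e i)) p (e i) = 0 := by
  have hdu : ∀ i, (fun q => fderiv ℝ u q (e i)) =ᶠ[𝓝 p] fun q => (f' (L q) * L (e i)).im := by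
    intro i
    filter_upwards [hu.eventuallyEq_nhds, hf] with q huq hfq
    rw [huq.fderiv_eq, (hfq.hasFDerivAt_im_comp_clm L).fderiv]
    simp
  have hd2 : ∀ i, fderiv ℝ (fun q => fderiv ℝ u q (e i)) p (e i) = (f'' * L (e i) ^ 2).im := by
    intro i
    rw [(hdu i).fderiv_eq, ((hf'.mul_const (L (e i))).hasFDerivAt_im_comp_clm L).fderiv]
    simp only [ContinuousLinearMap.comp_apply, FunLike.coe_smul, Pi.smul_apply,
      smul_eq_mul, imCLM_apply]
    ring_nf
  simp only [hd2, ← im_sum, ← Finset.mul_sum, hL, mul_zero, zero_im]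

theorem DifferentiableOn.contDiffOn_im_comp_clm {f : ℂ → ℂ} {U : Set ℂ}
    (hf : DifferentiableOn ℂ f U) (hU : IsOpen U) (n : WithTop ℕ∞) :
    ContDiffOn ℝ n (fun q => (f (L q)).im) (L ⁻¹' U) :=
  imCLM.contDiff.comp_contDiffOn
    (((hf.contDiffOn hU).restrict_scalars ℝ).comp L.contDiff.contDiffOn fun _ hq => hq)

end ImComp

def crossSection : EuclideanSpace ℝ (Fin 3) →L[ℝ] ℂ :=
  (EuclideanSpace.proj 1).smulRight 1 + (EuclideanSpace.proj 2).smulRight I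

theorem crossSection_apply (p : EuclideanSpace ℝ (Fin 3)) :
    crossSection p = p 1 + p 2 * I := by
  simp [crossSection, real_smul]

theorem crossSection_pt (x y t : ℝ) : crossSection (pt x y t) = y + t * I :=
  crossSection_apply _

theorem crossSection_pt_polar (x : ℝ) {r : ℝ} (hr : 0 < r) (θ : ℝ) :
    crossSection (pt x (r * Real.cos θ) (r * Real.sin θ)) = exp (Real.log r + θ * I) := by
  rw [crossSection_pt, exp_add, ← ofReal_exp, Real.exp_log hr, exp_mul_I]
  push_cast
  ring

theorem eq_pt_of_crossSection_eq_exp {p : EuclideanSpace ℝ (Fin 3)} {w : ℂ}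
    (hp : crossSection p = exp w) :
    p = pt (p 0) (Real.exp w.re * Real.cos w.im) (Real.exp w.re * Real.sin w.im) := by
  rw [crossSection_apply, Complex.ext_iff] at hp
  ext i
  fin_cases i
  · rfl
  · simpa [pt, exp_re] using hp.1
  · simpa [pt, exp_im] using hp.2

theorem sum_crossSection_single_sq :
    ∑ i, crossSection (EuclideanSpace.single i 1) ^ 2 = 0 := by
  simp [Fin.sum_univ_three, crossSection_apply]

theorem gradNormSq_eq_of_hasFDerivAt {B : EuclideanSpace ℝ (Fin 3) → ℝ} {d : ℂ}
    {p : EuclideanSpace ℝ (Fin 3)} (hB : HasFDerivAt B (imCLM ∘L (d • crossSection)) p) :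
    gradNormSq B p = ‖d‖ ^ 2 := by
  rw [gradNormSq, Fin.sum_univ_three, ← normSq_eq_norm_sq, normSq_apply]
  simp [hB.fderiv, crossSection_apply, sq, add_comm]

def openWedge (a b : ℝ) : Set (EuclideanSpace ℝ (Fin 3)) := crossSection ⁻¹' sector a b

theorem isOpen_openWedge (a b : ℝ) : IsOpen (openWedge a b) :=
  (isOpen_sector a b).preimage crossSection.continuous

theorem pt_polar_mem_openWedge {a b θ : ℝ} (x : ℝ) {r : ℝ} (hr : 0 < r) (ha : a < θ)
    (hb : θ < b) : pt x (r * Real.cos θ) (r * Real.sin θ) ∈ openWedge a b :=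
  ⟨Real.log r + θ * I, by simpa using And.intro ha hb, (crossSection_pt_polar x hr θ).symm⟩

theorem wedge_subset_openWedge {a b α : ℝ} (ha : a ≤ 0) (hb : α ≤ b) :
    wedge α ⊆ openWedge a b := by
  rintro p ⟨x, r, θ, hr, h₁, h₂, rfl⟩
  exact pt_polar_mem_openWedge x hr (by linarith) (by linarith)

def IsWedgePower (a b β : ℝ) (B : EuclideanSpace ℝ (Fin 3) → ℝ) : Prop :=
  ∀ x r θ : ℝ, 0 < r → a < θ → θ < b →
    B (pt x (r * Real.cos θ) (r * Real.sin θ)) = r ^ β * Real.sin (β * θ)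

namespace IsWedgePower

variable {a b β : ℝ} {B : EuclideanSpace ℝ (Fin 3) → ℝ}

theorem eqOn_im_cpowBranch (hB : IsWedgePower a b β B) (hab : b - a ≤ 2 * π) :
    Set.EqOn B (fun p => (cpowBranch ((a + b) / 2) β (crossSection p)).im) (openWedge a b) := by
  rintro p ⟨w, ⟨h₁, h₂⟩, hw⟩
  have hp := eq_pt_of_crossSection_eq_exp hw.symm
  dsimp only
  rw [← hw, cpowBranch_exp (abs_lt.2 ⟨by linarith, by linarith⟩), exp_im, hp,
    hB _ _ _ (Real.exp_pos _) h₁ h₂, Real.rpow_def_of_pos (Real.exp_pos _), Real.log_exp]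
  simp [mul_comm]

theorem hasFDerivAt (hB : IsWedgePower a b β B) (hab : b - a ≤ 2 * π)
    {p : EuclideanSpace ℝ (Fin 3)} (hp : p ∈ openWedge a b) :
    HasFDerivAt B
      (imCLM ∘L ((β * cpowBranch ((a + b) / 2) (β - 1) (crossSection p)) • crossSection)) p :=
  ((hasDerivAt_cpowBranch (exp_neg_mul_mem_slitPlane_of_mem_sector hab hp)
    β).hasFDerivAt_im_comp_clm crossSection).congr_of_eventuallyEq
      ((hB.eqOn_im_cpowBranch hab).eventuallyEq_of_mem ((isOpen_openWedge a b).mem_nhds hp))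

theorem hasFDerivAt_pt_polar (hB : IsWedgePower a b β B) (hab : b - a ≤ 2 * π) (x : ℝ)
    {r θ : ℝ} (hr : 0 < r) (ha : a < θ) (hb : θ < b) :
    HasFDerivAt B (imCLM ∘L ((β * exp ((β - 1) * (Real.log r + θ * I))) • crossSection))
      (pt x (r * Real.cos θ) (r * Real.sin θ)) := by
  have him : |(Real.log r + θ * I).im - (a + b) / 2| < π := by
    simpa using abs_lt.2 (⟨by linarith, by linarith⟩ : -π < θ - (a + b) / 2 ∧ θ - (a + b) / 2 < π)
  have h := hB.hasFDerivAt hab (pt_polar_mem_openWedge x hr ha hb)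
  rwa [crossSection_pt_polar x hr, cpowBranch_exp him] at h

theorem sum_fderiv_fderiv_eq_zero (hB : IsWedgePower a b β B) (hab : b - a ≤ 2 * π)
    {p : EuclideanSpace ℝ (Fin 3)} (hp : p ∈ openWedge a b) :
    ∑ i, fderiv ℝ (fun q => fderiv ℝ B q (EuclideanSpace.single i 1)) p
      (EuclideanSpace.single i 1) = 0 :=
  sum_fderiv_fderiv_im_comp_clm crossSection _ sum_crossSection_single_sq
    ((hB.eqOn_im_cpowBranch hab).eventuallyEq_of_mem ((isOpen_openWedge a b).mem_nhds hp))
    (((isOpen_openWedge a b).eventually_mem hp).mono fun _ hq =>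
      hasDerivAt_cpowBranch (exp_neg_mul_mem_slitPlane_of_mem_sector hab hq) β)
    ((hasDerivAt_cpowBranch (exp_neg_mul_mem_slitPlane_of_mem_sector hab hp)
      (β - 1)).const_mul (β : ℂ))

theorem contDiffOn (hB : IsWedgePower a b β B) (hab : b - a ≤ 2 * π) (n : WithTop ℕ∞) :
    ContDiffOn ℝ n B (openWedge a b) := by
  have hdiff : DifferentiableOn ℂ (cpowBranch ((a + b) / 2) β) (sector a b) := fun _ hz =>
    (hasDerivAt_cpowBranch (exp_neg_mul_mem_slitPlane_of_mem_sector hab hz)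
      β).differentiableAt.differentiableWithinAt
  exact (hdiff.contDiffOn_im_comp_clm crossSection (isOpen_sector a b) n).congr
    (hB.eqOn_im_cpowBranch hab)

theorem gradNormSq_pt_face (hB : IsWedgePower a b β B) (hab : b - a ≤ 2 * π) (ha : a < 0)
    (hb : 0 < b) (x : ℝ) {y : ℝ} (hy : 0 < y) :
    gradNormSq B (pt x y 0) = β ^ 2 * y ^ (2 * (β - 1)) := by
  have h := hB.hasFDerivAt_pt_polar hab x hy ha hb
  simp only [Real.cos_zero, Real.sin_zero, mul_one, mul_zero, ofReal_zero, zero_mul,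
    add_zero] at h
  rw [gradNormSq_eq_of_hasFDerivAt h, norm_mul, norm_exp, norm_real, Real.norm_eq_abs, mul_pow,
    sq_abs,
    show ((β : ℂ) - 1) * (Real.log y : ℂ) = ((β - 1) * Real.log y : ℝ) by push_cast; ring,
    ofReal_re, Real.rpow_def_of_pos hy, ← Real.exp_nat_mul]
  ring_nf

end IsWedgePower

theorem im_mul_exp_mul_normal_eq_zero {α β : ℝ} (hβα : β * α = π / 2) (r : ℝ) :
    ((β * exp ((β - 1) * (Real.log r + α * I))) * (-Real.sin α + Real.cos α * I)).im = 0 := by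
  have hnormal : (-Real.sin α + Real.cos α * I : ℂ) = I * exp (α * I) := by
    rw [exp_mul_I]
    push_cast
    linear_combination -Complex.sin α * I_sq
  have hexp : exp ((β - 1) * (Real.log r + α * I)) * exp (α * I)
      = exp (((β - 1) * Real.log r : ℝ)) * I := by
    rw [← exp_add, show ((β : ℂ) - 1) * (Real.log r + α * I) + α * I
        = ((β - 1) * Real.log r : ℝ) + ((β * α : ℝ) : ℂ) * I by push_cast; ring,
      exp_add, hβα, exp_mul_I]
    simp
  rw [hnormal, show ∀ u v : ℂ, β * u * (I * v) = β * I * (u * v) by intros; ring, hexp,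
    ← ofReal_exp, mul_mul_mul_comm, I_mul_I, ← ofReal_mul, mul_neg_one, ← ofReal_neg, ofReal_im]

theorem AntilipschitzWith.setLIntegral_comp_le {X Y : Type*} [EMetricSpace X] [MeasurableSpace X]
    [BorelSpace X] [EMetricSpace Y] [MeasurableSpace Y] [BorelSpace Y] {f : X → Y}
    (hf : AntilipschitzWith 1 f) (hfm : MeasurableEmbedding f) {d : ℝ} (hd : 0 ≤ d) (s : Set X)
    (g : Y → ENNReal) :
    ∫⁻ x in s, g (f x) ∂μH[d] ≤ ∫⁻ y in f '' s, g y ∂μH[d] := by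
  rw [← hfm.lintegral_map]
  refine lintegral_mono' (Measure.le_iff.2 fun A hA => ?_) le_rfl
  rw [Measure.map_apply hfm.measurable hA, Measure.restrict_apply (hfm.measurable hA),
    Measure.restrict_apply hA, Set.inter_comm, Set.inter_comm A, ← Set.image_inter_preimage]
  simpa using hf.le_hausdorffMeasure_image hd (s ∩ f ⁻¹' A)

/-- `ℝ × ℝ` carries the sup metric, so this embedding of the plane `t = 0` is only
`1`-antilipschitz, not an isometry; that suffices for a lower bound on `μH[2]`. -/
def planeEmbedding : ℝ × ℝ →L[ℝ] EuclideanSpace ℝ (Fin 3) :=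
  (ContinuousLinearMap.fst ℝ ℝ ℝ).smulRight (EuclideanSpace.single 0 1) +
    (ContinuousLinearMap.snd ℝ ℝ ℝ).smulRight (EuclideanSpace.single 1 1)

theorem planeEmbedding_apply (q : ℝ × ℝ) : planeEmbedding q = pt q.1 q.2 0 := by
  ext i
  fin_cases i <;> simp [planeEmbedding, pt]

theorem antilipschitzWith_planeEmbedding : AntilipschitzWith 1 planeEmbedding :=
  AntilipschitzWith.of_le_mul_dist fun q q' => by
    rw [NNReal.coe_one, one_mul, Prod.dist_eq]
    exact max_le (le_of_eq_of_le (by simp [planeEmbedding]) (PiLp.dist_apply_le _ _ 0))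
      (le_of_eq_of_le (by simp [planeEmbedding]) (PiLp.dist_apply_le _ _ 1))

theorem measurableEmbedding_planeEmbedding : MeasurableEmbedding planeEmbedding :=
  (antilipschitzWith_planeEmbedding.isClosedEmbedding
    planeEmbedding.uniformContinuous).measurableEmbedding

theorem lintegral_rpow_Ioo_zero_one_eq_top {s : ℝ} (hs : s ≤ -1) :
    ∫⁻ y in Set.Ioo (0 : ℝ) 1, ENNReal.ofReal (y ^ s) = ⊤ := by
  by_contra h
  have hint : IntegrableOn (fun y : ℝ => y ^ s) (Set.Ioo 0 1) :=
    (lintegral_ofReal_ne_top_iff_integrable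
      ((continuousOn_id.rpow_const fun y hy => Or.inl hy.1.ne').aestronglyMeasurable
        measurableSet_Ioo)
      ((ae_restrict_mem measurableSet_Ioo).mono fun y hy => Real.rpow_nonneg hy.1.le s)).1 h
  rw [intervalIntegral.integrableOn_Ioo_rpow_iff zero_lt_one] at hint
  linarith

theorem lintegral_face_eq_top {g : EuclideanSpace ℝ (Fin 3) → ℝ} {c s : ℝ} (hc : 0 < c)
    (hs : s ≤ -1) (hg : ∀ x y : ℝ, 0 < y → g (pt x y 0) = c * y ^ s) :
    ∫⁻ p in {p : EuclideanSpace ℝ (Fin 3) | ∃ x y : ℝ, |x| < 1 ∧ 0 < y ∧ y < 1 ∧ p = pt x y 0},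
      ENNReal.ofReal (g p) ∂μH[2] = ⊤ := by
  set T : Set (ℝ × ℝ) := Set.Ioo (-1) 1 ×ˢ Set.Ioo 0 1
  have himage : planeEmbedding '' T =
      {p | ∃ x y : ℝ, |x| < 1 ∧ 0 < y ∧ y < 1 ∧ p = pt x y 0} := by
    ext p
    simp only [T, Set.mem_image, Set.mem_prod, Set.mem_Ioo, Prod.exists, planeEmbedding_apply,
      abs_lt, Set.mem_ofPred_eq]
    constructor
    · rintro ⟨x, y, ⟨hx, hy⟩, rfl⟩
      exact ⟨x, y, hx, hy.1, hy.2, rfl⟩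
    · rintro ⟨x, y, hx, hy₀, hy₁, rfl⟩
      exact ⟨x, y, ⟨hx, hy₀, hy₁⟩, rfl⟩
  have hprod := lintegral_prod_mul (μ := volume.restrict (Set.Ioo (-1 : ℝ) 1))
    (ν := volume.restrict (Set.Ioo (0 : ℝ) 1)) (f := fun _ => 1) aemeasurable_const
    (measurable_id.pow_const s).ennreal_ofReal.aemeasurable
  simp only [one_mul, id_eq, Measure.prod_restrict, ← Measure.volume_eq_prod, lintegral_const,
    Measure.restrict_apply_univ, Real.volume_Ioo] at hprod
  have hT : ∫⁻ q in T, ENNReal.ofReal (g (planeEmbedding q)) ∂μH[2] = ⊤ := by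
    rw [hausdorffMeasure_prod_real,
      setLIntegral_congr_fun (measurableSet_Ioo.prod measurableSet_Ioo)
        (g := fun q => ENNReal.ofReal c * ENNReal.ofReal (q.2 ^ s))
        fun q hq => by rw [planeEmbedding_apply, hg _ _ hq.2.1, ENNReal.ofReal_mul hc.le],
      lintegral_const_mul' _ _ ENNReal.ofReal_ne_top, hprod, lintegral_rpow_Ioo_zero_one_eq_top hs]
    simp [hc]
  rw [← himage, eq_top_iff, ← hT]
  exact antilipschitzWith_planeEmbedding.setLIntegral_comp_le measurableEmbedding_planeEmbedding
    zero_le_two T _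

theorem wedge_counterexample_general
    (α : ℝ) (hα₁ : Real.pi ≤ α)
    (β : ℝ) (hβ : β = Real.pi / (2 * α))
    (δ : ℝ) (hδ : 0 < δ) (hαδ : α + 2 * δ < 2 * Real.pi)
    (B : EuclideanSpace ℝ (Fin 3) → ℝ)
    (hB : ∀ x r θ : ℝ, 0 < r → -δ < θ → θ < α + δ →
      B (pt x (r * Real.cos θ) (r * Real.sin θ)) = r ^ β * Real.sin (β * θ)) :
    (ContDiffOn ℝ 2 B (wedge α) ∧
      ∀ p ∈ wedge α,
        ∑ i, fderiv ℝ (fun q => fderiv ℝ B q (EuclideanSpace.single i 1)) p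
          (EuclideanSpace.single i 1) = 0) ∧
    (∀ x y : ℝ, 0 < y →
      Tendsto B (nhdsWithin (pt x y 0) (wedge α)) (nhds 0)) ∧
    (∀ x y : ℝ, 0 < y → B (pt x y 0) = 0) ∧
    (∀ x r : ℝ, 0 < r →
      fderiv ℝ B (pt x (r * Real.cos α) (r * Real.sin α))
        (pt 0 (-Real.sin α) (Real.cos α)) = 0) ∧
    ∫⁻ p in {p : EuclideanSpace ℝ (Fin 3) |
        ∃ x y : ℝ, |x| < 1 ∧ 0 < y ∧ y < 1 ∧ p = pt x y 0},
      ENNReal.ofReal (gradNormSq B p) ∂μH[2] = ⊤ := by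
  have hα : 0 < α := Real.pi_pos.trans_le hα₁
  have hpow : IsWedgePower (-δ) (α + δ) β B := hB
  have hab : α + δ - -δ ≤ 2 * π := by linarith
  have hwedge : wedge α ⊆ openWedge (-δ) (α + δ) :=
    wedge_subset_openWedge (by linarith) (by linarith)
  have hface : ∀ x y : ℝ, 0 < y → B (pt x y 0) = 0 := fun x y hy => by
    simpa using hB x y 0 hy (by linarith) (by linarith)
  refine ⟨⟨(hpow.contDiffOn hab 2).mono hwedge,
    fun p hp => hpow.sum_fderiv_fderiv_eq_zero hab (hwedge hp)⟩, fun x y hy => ?_, hface,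
    fun x r hr => ?_, ?_⟩
  · have h := (hpow.hasFDerivAt_pt_polar hab x hy (θ := 0) (by linarith) (by linarith)).continuousAt
    simp only [Real.cos_zero, Real.sin_zero, mul_one, mul_zero] at h
    simpa [hface x y hy] using h.continuousWithinAt.tendsto
  · rw [(hpow.hasFDerivAt_pt_polar hab x hr (by linarith) (by linarith)).fderiv]
    simpa [crossSection_pt] using
      im_mul_exp_mul_normal_eq_zero (show β * α = π / 2 by rw [hβ]; field_simp) r
  · have hβ₀ : 0 < β := by rw [hβ]; positivity
    have hβ₁ : β ≤ 1 / 2 := by rw [hβ, div_le_iff₀ (by positivity)]; linarith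
    exact lintegral_face_eq_top (by positivity) (by linarith)
      fun x y hy => hpow.gradNormSq_pt_face hab (by linarith) (by linarith) x hy

/-- the three-dimensional wedge counterexample.  With
`π ≤ α < 2π`, `β = π/(2α)` and `B(x, r cos θ, r sin θ) = r^β sin(βθ)`
(hypothesized on the slightly larger wedge `−δ < θ < α + δ`):
`B` is harmonic on `Ω_α`; `B` vanishes on the Dirichlet face `D` (both as a
nontangential/full limit from `Ω_α` and as the value of the real-analytic
extension); the derivative of (the extension of) `B` in the unit direction
`(0, −sin α, cos α)` normal to the Neumann face `N` vanishes on `N`; and yet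
`∫_{{(x,y,0) : |x|<1, 0<y<1}} ‖∇B‖² dH² = +∞`. -/
theorem wedge_counterexample
    (α : ℝ) (hα₁ : Real.pi ≤ α) (hα₂ : α < 2 * Real.pi)
    (β : ℝ) (hβ : β = Real.pi / (2 * α))
    (δ : ℝ) (hδ : 0 < δ) (hαδ : α + 2 * δ < 2 * Real.pi)
    (B : EuclideanSpace ℝ (Fin 3) → ℝ)
    (hB : ∀ x r θ : ℝ, 0 < r → -δ < θ → θ < α + δ →
      B (pt x (r * Real.cos θ) (r * Real.sin θ)) = r ^ β * Real.sin (β * θ)) :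
    (ContDiffOn ℝ 2 B (wedge α) ∧
      ∀ p ∈ wedge α,
        ∑ i, fderiv ℝ (fun q => fderiv ℝ B q (EuclideanSpace.single i 1)) p
          (EuclideanSpace.single i 1) = 0) ∧
    (∀ x y : ℝ, 0 < y →
      Tendsto B (nhdsWithin (pt x y 0) (wedge α)) (nhds 0)) ∧
    (∀ x y : ℝ, 0 < y → B (pt x y 0) = 0) ∧
    (∀ x r : ℝ, 0 < r →
      fderiv ℝ B (pt x (r * Real.cos α) (r * Real.sin α))
        (pt 0 (-Real.sin α) (Real.cos α)) = 0) ∧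
    ∫⁻ p in {p : EuclideanSpace ℝ (Fin 3) |
        ∃ x y : ℝ, |x| < 1 ∧ 0 < y ∧ y < 1 ∧ p = pt x y 0},
      ENNReal.ofReal (gradNormSq B p) ∂μH[2] = ⊤ :=
  wedge_counterexample_general α hα₁ β hβ δ hδ hαδ B hB
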